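/- Let λ be a probability measure (V = 1) and let ρ₀, ρ₁ be densities of mass 1. With the total variation distance d_TV(ρ₀, ρ₁) := (1/2) ∫ |ρ₀ − ρ₁| dλ, the Fisher–Rao distance satisfies d_TV(ρ₀, ρ₁) ≤ d_F(ρ₀, ρ₁) ≤ √(π · d_TV(ρ₀, ρ₁)). (Item 7 of the Proposition in Appendix B, comparing the Fisher–Rao and total variation distances.) -/

import Mathlib

open MeasureTheory Real Set

/-- A density of mass `1`: a measurable nonnegative function with total integral `1`. -/
def IsDensity {X : Type*} [MeasurableSpace X] (lam : Measure X) (ρ : X → ℝ) : Prop :=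
  Measurable ρ ∧ (∀ x, 0 ≤ ρ x) ∧ (∫ x, ρ x ∂lam) = 1

/-- The Fisher–Rao (spherical Hellinger) distance between two probability densities. -/
noncomputable def fisherRaoDist {X : Type*} [MeasurableSpace X] (lam : Measure X)
    (ρ₀ ρ₁ : X → ℝ) : ℝ :=
  Real.arccos (∫ x, Real.sqrt (ρ₀ x * ρ₁ x) ∂lam)

/-- The total variation distance between two probability densities. -/
noncomputable def tvDist {X : Type*} [MeasurableSpace X] (lam : Measure X)
    (ρ₀ ρ₁ : X → ℝ) : ℝ :=
  (1 / 2) * ∫ x, |ρ₀ x - ρ₁ x| ∂lam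

/-!
Write `a = √ρ₀`, `b = √ρ₁` and `s = ∫ a b` for the Bhattacharyya coefficient, so that
`d_F = arccos s`. Then `∫ (a - b)² = 2 - 2s` and `∫ (a + b)² = 2 + 2s`, while
`|ρ₀ - ρ₁| = |a - b| (a + b)`. Pointwise `(a - b)² ≤ |a - b| (a + b)` gives `1 - s ≤ d_TV`, and
Cauchy–Schwarz gives `d_TV ≤ √(1 - s²) = sin (arccos s) ≤ arccos s`. For the upper bound,
integrating Jordan's inequality `2t/π ≤ sin t` over `[0, θ]` gives `θ² ≤ π (1 - cos θ)` for
`θ ∈ [0, π/2]`; at `θ = arccos s` this is `d_F² ≤ π (1 - s) ≤ π d_TV`.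
-/

namespace Real

lemma sq_le_pi_mul_one_sub_cos {θ : ℝ} (hθ₀ : 0 ≤ θ) (hθ : θ ≤ π / 2) :
    θ ^ 2 ≤ π * (1 - cos θ) := by
  have h : ∫ t in 0..θ, 2 / π * t ≤ ∫ t in 0..θ, sin t :=
    intervalIntegral.integral_mono_on hθ₀
      ((continuous_const.mul continuous_id).intervalIntegrable _ _)
      (continuous_sin.intervalIntegrable _ _) fun t ht ↦ mul_le_sin ht.1 (ht.2.trans hθ)
  rwa [intervalIntegral.integral_const_mul, integral_id, integral_sin, cos_zero,
    show 2 / π * ((θ ^ 2 - 0 ^ 2) / 2) = θ ^ 2 / π by ring, div_le_iff₀' pi_pos] at h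

lemma arccos_sq_le_pi_mul_one_sub {s : ℝ} (hs₀ : 0 ≤ s) (hs₁ : s ≤ 1) :
    arccos s ^ 2 ≤ π * (1 - s) := by
  simpa [cos_arccos (by linarith) hs₁] using
    sq_le_pi_mul_one_sub_cos (arccos_nonneg s) (arccos_le_pi_div_two.2 hs₀)

lemma abs_sub_eq_abs_sqrt_sub_mul_sqrt_add {x y : ℝ} (hx : 0 ≤ x) (hy : 0 ≤ y) :
    |x - y| = |√x - √y| * (√x + √y) := by
  have hxy : x - y = (√x - √y) * (√x + √y) := by
    rw [← sq_sqrt hx, ← sq_sqrt hy]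
    simp only [sqrt_sq (sqrt_nonneg _)]
    ring
  rw [hxy, abs_mul, abs_of_nonneg (by positivity : 0 ≤ √x + √y)]

lemma sq_sqrt_sub_sqrt_le_abs_sub {x y : ℝ} (hx : 0 ≤ x) (hy : 0 ≤ y) :
    (√x - √y) ^ 2 ≤ |x - y| := by
  have hle : |√x - √y| ≤ √x + √y :=
    abs_le.2 ⟨by linarith [sqrt_nonneg x], by linarith [sqrt_nonneg y]⟩
  rw [abs_sub_eq_abs_sqrt_sub_mul_sqrt_add hx hy, ← sq_abs, sq]
  exact mul_le_mul_of_nonneg_left hle (abs_nonneg _)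

end Real

namespace MeasureTheory

noncomputable def bhattacharyyaCoeff {X : Type*} [MeasurableSpace X] (μ : Measure X)
    (f g : X → ℝ) : ℝ :=
  ∫ x, √(f x * g x) ∂μ

variable {X : Type*} [MeasurableSpace X] {μ : Measure X} {f g : X → ℝ}

lemma bhattacharyyaCoeff_nonneg : 0 ≤ bhattacharyyaCoeff μ f g :=
  integral_nonneg fun _ ↦ sqrt_nonneg _

lemma integral_mul_le_sqrt_integral_sq_mul_sqrt_integral_sq (hf₀ : 0 ≤ᵐ[μ] f)
    (hg₀ : 0 ≤ᵐ[μ] g) (hf : MemLp f 2 μ) (hg : MemLp g 2 μ) :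
    ∫ x, f x * g x ∂μ ≤ √(∫ x, f x ^ 2 ∂μ) * √(∫ x, g x ^ 2 ∂μ) := by
  have h := integral_mul_le_Lp_mul_Lq_of_nonneg HolderConjugate.two_two hf₀ hg₀
    (by rwa [ENNReal.ofReal_ofNat]) (by rwa [ENNReal.ofReal_ofNat])
  simpa only [sqrt_eq_rpow, rpow_two] using h

lemma Integrable.memLp_two_sqrt (hf : Integrable f μ) (hf₀ : 0 ≤ᵐ[μ] f) :
    MemLp (fun x ↦ √(f x)) 2 μ :=
  (memLp_two_iff_integrable_sq (continuous_sqrt.comp_aestronglyMeasurable hf.1)).2 <|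
    hf.congr <| by filter_upwards [hf₀] with x hx using (sq_sqrt hx).symm

lemma Integrable.sqrt_mul (hf : Integrable f μ) (hg : Integrable g μ) (hf₀ : 0 ≤ᵐ[μ] f)
    (hg₀ : 0 ≤ᵐ[μ] g) : Integrable (fun x ↦ √(f x * g x)) μ :=
  ((hf.memLp_two_sqrt hf₀).integrable_mul (hg.memLp_two_sqrt hg₀)).congr <| by
    filter_upwards [hf₀] with x hx using (Real.sqrt_mul hx _).symm

lemma integral_sq_sqrt_sub_sqrt (hf : Integrable f μ) (hg : Integrable g μ)
    (hf₀ : 0 ≤ᵐ[μ] f) (hg₀ : 0 ≤ᵐ[μ] g) :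
    ∫ x, (√(f x) - √(g x)) ^ 2 ∂μ =
      ∫ x, f x ∂μ + ∫ x, g x ∂μ - 2 * bhattacharyyaCoeff μ f g := by
  calc ∫ x, (√(f x) - √(g x)) ^ 2 ∂μ = ∫ x, (f x + g x - 2 * √(f x * g x)) ∂μ := by
        refine integral_congr_ae ?_
        filter_upwards [hf₀, hg₀] with x hx hy
        simp only [sub_sq, sq_sqrt hx, sq_sqrt hy, sqrt_mul hx]
        ring
    _ = _ := by
        rw [integral_sub (f := fun x ↦ f x + g x) (hf.add hg)
          ((hf.sqrt_mul hg hf₀ hg₀).const_mul 2), integral_add hf hg, integral_const_mul,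
          bhattacharyyaCoeff]

lemma integral_sq_sqrt_add_sqrt (hf : Integrable f μ) (hg : Integrable g μ)
    (hf₀ : 0 ≤ᵐ[μ] f) (hg₀ : 0 ≤ᵐ[μ] g) :
    ∫ x, (√(f x) + √(g x)) ^ 2 ∂μ =
      ∫ x, f x ∂μ + ∫ x, g x ∂μ + 2 * bhattacharyyaCoeff μ f g := by
  calc ∫ x, (√(f x) + √(g x)) ^ 2 ∂μ = ∫ x, (f x + g x + 2 * √(f x * g x)) ∂μ := by
        refine integral_congr_ae ?_
        filter_upwards [hf₀, hg₀] with x hx hy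
        simp only [add_sq, sq_sqrt hx, sq_sqrt hy, sqrt_mul hx]
        ring
    _ = _ := by
        rw [integral_add (f := fun x ↦ f x + g x) (hf.add hg)
          ((hf.sqrt_mul hg hf₀ hg₀).const_mul 2), integral_add hf hg, integral_const_mul,
          bhattacharyyaCoeff]

lemma integral_sq_sqrt_sub_sqrt_le_integral_abs_sub (hf : Integrable f μ)
    (hg : Integrable g μ) (hf₀ : 0 ≤ᵐ[μ] f) (hg₀ : 0 ≤ᵐ[μ] g) :
    ∫ x, (√(f x) - √(g x)) ^ 2 ∂μ ≤ ∫ x, |f x - g x| ∂μ :=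
  integral_mono_ae ((hf.memLp_two_sqrt hf₀).sub (hg.memLp_two_sqrt hg₀)).integrable_sq
    (hf.sub hg).abs <| by
      filter_upwards [hf₀, hg₀] with x hx hy using sq_sqrt_sub_sqrt_le_abs_sub hx hy

lemma integral_abs_sub_le_sqrt_mul_sqrt (hf : Integrable f μ) (hg : Integrable g μ)
    (hf₀ : 0 ≤ᵐ[μ] f) (hg₀ : 0 ≤ᵐ[μ] g) :
    ∫ x, |f x - g x| ∂μ ≤
      √(∫ x, (√(f x) - √(g x)) ^ 2 ∂μ) * √(∫ x, (√(f x) + √(g x)) ^ 2 ∂μ) := by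
  have hf₂ := hf.memLp_two_sqrt hf₀
  have hg₂ := hg.memLp_two_sqrt hg₀
  have h := integral_mul_le_sqrt_integral_sq_mul_sqrt_integral_sq
    (ae_of_all _ fun x ↦ abs_nonneg (√(f x) - √(g x)))
    (ae_of_all _ fun x ↦ add_nonneg (sqrt_nonneg (f x)) (sqrt_nonneg (g x)))
    (hf₂.sub hg₂).abs (hf₂.add hg₂)
  simp only [sq_abs] at h
  refine le_of_eq_of_le (integral_congr_ae ?_) h
  filter_upwards [hf₀, hg₀] with x hx hy using abs_sub_eq_abs_sqrt_sub_mul_sqrt_add hx hy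

end MeasureTheory

section IsDensity

variable {X : Type*} [MeasurableSpace X] {μ : Measure X} {ρ ρ₀ ρ₁ : X → ℝ}

lemma IsDensity.integrable (h : IsDensity μ ρ) : Integrable ρ μ :=
  .of_integral_ne_zero <| by rw [h.2.2]; exact one_ne_zero

lemma IsDensity.ae_nonneg (h : IsDensity μ ρ) : 0 ≤ᵐ[μ] ρ :=
  ae_of_all _ h.2.1

lemma integral_sq_sqrt_sub_sqrt_of_isDensity (h₀ : IsDensity μ ρ₀) (h₁ : IsDensity μ ρ₁) :
    ∫ x, (√(ρ₀ x) - √(ρ₁ x)) ^ 2 ∂μ = 2 - 2 * bhattacharyyaCoeff μ ρ₀ ρ₁ := by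
  rw [integral_sq_sqrt_sub_sqrt h₀.integrable h₁.integrable h₀.ae_nonneg h₁.ae_nonneg,
    h₀.2.2, h₁.2.2, one_add_one_eq_two]

lemma integral_sq_sqrt_add_sqrt_of_isDensity (h₀ : IsDensity μ ρ₀) (h₁ : IsDensity μ ρ₁) :
    ∫ x, (√(ρ₀ x) + √(ρ₁ x)) ^ 2 ∂μ = 2 + 2 * bhattacharyyaCoeff μ ρ₀ ρ₁ := by
  rw [integral_sq_sqrt_add_sqrt h₀.integrable h₁.integrable h₀.ae_nonneg h₁.ae_nonneg,
    h₀.2.2, h₁.2.2, one_add_one_eq_two]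

lemma bhattacharyyaCoeff_le_one (h₀ : IsDensity μ ρ₀) (h₁ : IsDensity μ ρ₁) :
    bhattacharyyaCoeff μ ρ₀ ρ₁ ≤ 1 := by
  have h := integral_sq_sqrt_sub_sqrt_of_isDensity h₀ h₁
  have : 0 ≤ ∫ x, (√(ρ₀ x) - √(ρ₁ x)) ^ 2 ∂μ := integral_nonneg fun x ↦ sq_nonneg _
  linarith

lemma one_sub_bhattacharyyaCoeff_le_tvDist (h₀ : IsDensity μ ρ₀) (h₁ : IsDensity μ ρ₁) :
    1 - bhattacharyyaCoeff μ ρ₀ ρ₁ ≤ tvDist μ ρ₀ ρ₁ := by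
  have h := integral_sq_sqrt_sub_sqrt_le_integral_abs_sub h₀.integrable h₁.integrable
    h₀.ae_nonneg h₁.ae_nonneg
  rw [integral_sq_sqrt_sub_sqrt_of_isDensity h₀ h₁] at h
  rw [tvDist]
  linarith

lemma tvDist_le_sqrt_one_sub_bhattacharyyaCoeff_sq (h₀ : IsDensity μ ρ₀)
    (h₁ : IsDensity μ ρ₁) :
    tvDist μ ρ₀ ρ₁ ≤ √(1 - bhattacharyyaCoeff μ ρ₀ ρ₁ ^ 2) := by
  have hs₀ : 0 ≤ bhattacharyyaCoeff μ ρ₀ ρ₁ := bhattacharyyaCoeff_nonneg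
  have h := integral_abs_sub_le_sqrt_mul_sqrt h₀.integrable h₁.integrable
    h₀.ae_nonneg h₁.ae_nonneg
  rw [integral_sq_sqrt_sub_sqrt_of_isDensity h₀ h₁,
    integral_sq_sqrt_add_sqrt_of_isDensity h₀ h₁, ← sqrt_mul' _ (by linarith),
    show (2 - 2 * bhattacharyyaCoeff μ ρ₀ ρ₁) * (2 + 2 * bhattacharyyaCoeff μ ρ₀ ρ₁) =
      2 ^ 2 * (1 - bhattacharyyaCoeff μ ρ₀ ρ₁ ^ 2) by ring,
    sqrt_mul (by norm_num), sqrt_sq zero_le_two] at h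
  rw [tvDist]
  linarith

end IsDensity

theorem tv_le_fisherRao_le_general
    {X : Type*} [MeasurableSpace X] (lam : Measure X)
    (ρ₀ ρ₁ : X → ℝ) (h₀ : IsDensity lam ρ₀) (h₁ : IsDensity lam ρ₁) :
    tvDist lam ρ₀ ρ₁ ≤ fisherRaoDist lam ρ₀ ρ₁ ∧
    fisherRaoDist lam ρ₀ ρ₁ ≤ Real.sqrt (π * tvDist lam ρ₀ ρ₁) := by
  set s := bhattacharyyaCoeff lam ρ₀ ρ₁
  change tvDist lam ρ₀ ρ₁ ≤ arccos s ∧ arccos s ≤ √(π * tvDist lam ρ₀ ρ₁)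
  constructor
  · calc tvDist lam ρ₀ ρ₁ ≤ √(1 - s ^ 2) := tvDist_le_sqrt_one_sub_bhattacharyyaCoeff_sq h₀ h₁
      _ = sin (arccos s) := (sin_arccos s).symm
      _ ≤ arccos s := sin_le (arccos_nonneg s)
  · calc arccos s = √(arccos s ^ 2) := (sqrt_sq (arccos_nonneg s)).symm
      _ ≤ √(π * (1 - s)) := sqrt_le_sqrt <|
          arccos_sq_le_pi_mul_one_sub bhattacharyyaCoeff_nonneg (bhattacharyyaCoeff_le_one h₀ h₁)
      _ ≤ √(π * tvDist lam ρ₀ ρ₁) := by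
        gcongr
        exact one_sub_bhattacharyyaCoeff_le_tvDist h₀ h₁

/-- **Comparison of the Fisher–Rao and total variation distances** (item 7 of the
Proposition in Appendix B): for a probability measure `λ`,
`d_TV ≤ d_F ≤ √(π·d_TV)`. -/
theorem tv_le_fisherRao_le
    {X : Type*} [MeasurableSpace X] (lam : Measure X) [IsProbabilityMeasure lam]
    (ρ₀ ρ₁ : X → ℝ) (h₀ : IsDensity lam ρ₀) (h₁ : IsDensity lam ρ₁) :
    tvDist lam ρ₀ ρ₁ ≤ fisherRaoDist lam ρ₀ ρ₁ ∧
    fisherRaoDist lam ρ₀ ρ₁ ≤ Real.sqrt (π * tvDist lam ρ₀ ρ₁) :=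
  tv_le_fisherRao_le_general lam ρ₀ ρ₁ h₀ h₁
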